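/- If a graph H is obtained from G by a sequence of identifications of vertices such that at each step the identified vertices are at distance at least 3 in the current graph, then h(G) ≤ h(H). -/

import Mathlib

def IsHarmonious {V : Type*} {α : Type*} (G : SimpleGraph V) (c : V → α) : Prop :=
  (∀ ⦃u v : V⦄, G.Adj u v → c u ≠ c v) ∧
  ∀ ⦃u v x y : V⦄, G.Adj u v → G.Adj x y →
    s(c u, c v) = s(c x, c y) → s(u, v) = s(x, y)

noncomputable def hchrom {V : Type*} [Fintype V] (G : SimpleGraph V) : ℕ :=
  sInf {k | ∃ c : V → Fin k, IsHarmonious G c}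

def DistAtLeastThree {V : Type*} (G : SimpleGraph V) (u v : V) : Prop :=
  u ≠ v ∧ ¬ G.Adj u v ∧ ∀ w : V, ¬ (G.Adj u w ∧ G.Adj w v)

/-- The graph `G ∘ uv` obtained by identifying `v` with `u`: vertex `v` is
removed and `u` becomes adjacent to all former neighbors of `v`. -/
def identify {V : Type*} (G : SimpleGraph V) (u v : V) :
    SimpleGraph {x : V // x ≠ v} where
  Adj a b := a ≠ b ∧
    (G.Adj a.1 b.1 ∨ (a.1 = u ∧ G.Adj v b.1) ∨ (b.1 = u ∧ G.Adj a.1 v))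
  symm := by
    constructor
    rintro a b ⟨hab, h | ⟨h1, h2⟩ | ⟨h1, h2⟩⟩
    · exact ⟨hab.symm, Or.inl h.symm⟩
    · exact ⟨hab.symm, Or.inr (Or.inr ⟨h1, h2.symm⟩)⟩
    · exact ⟨hab.symm, Or.inr (Or.inl ⟨h1, h2.symm⟩)⟩
  loopless := ⟨fun a h => h.1 rfl⟩

/-- `SeqIdent3 G H`: `H` is obtained from `G` by a sequence of identifications,
each applied to a pair of vertices at distance at least 3 in the current graph. -/
inductive SeqIdent3 : ∀ {n m : ℕ}, SimpleGraph (Fin n) → SimpleGraph (Fin m) → Prop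
  | refl {n : ℕ} (G : SimpleGraph (Fin n)) : SeqIdent3 G G
  | step {n m : ℕ} {G : SimpleGraph (Fin (n + 1))} {G' : SimpleGraph (Fin n)}
      {H : SimpleGraph (Fin m)} (u v : Fin (n + 1))
      (hd : DistAtLeastThree G u v) (hiso : Nonempty (G' ≃g identify G u v)) :
      SeqIdent3 G' H → SeqIdent3 G H

/-!
Identifying two vertices `u`, `v` at distance at least 3 is a graph homomorphism
`G →g G ∘ uv` that is injective on edges: two distinct edges with the same image would
either be `uv` itself or form a path `u - w - v`. A harmonious colouring pulls back along
any homomorphism that is injective on edges, and `h` is invariant under isomorphism.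
-/

section

variable {V W α : Type*} {G : SimpleGraph V} {H : SimpleGraph W}

lemma SimpleGraph.injOn_sym2Map_edgeSet {f : V → W}
    (hf : ∀ ⦃a b x y⦄, G.Adj a b → G.Adj x y → f a = f x → f b = f y → a = x ∧ b = y) :
    Set.InjOn (Sym2.map f) G.edgeSet := by
  intro e he e' he' hee'
  induction e using Sym2.ind with | h a b => ?_
  induction e' using Sym2.ind with | h x y => ?_
  rw [SimpleGraph.mem_edgeSet] at he he'
  rw [Sym2.map_mk, Sym2.map_mk, Sym2.eq_iff] at hee'
  rcases hee' with ⟨hax, hby⟩ | ⟨hay, hbx⟩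
  · obtain ⟨rfl, rfl⟩ := hf he he' hax hby
    rfl
  · obtain ⟨rfl, rfl⟩ := hf he he'.symm hay hbx
    exact Sym2.eq_swap

lemma isHarmonious_of_injective {c : V → α} (hc : Function.Injective c) :
    IsHarmonious G c :=
  ⟨fun _ _ hab hcab => hab.ne (hc hcab),
    fun _ _ _ _ _ _ hcol => Sym2.map.injective hc (by simpa only [Sym2.map_mk] using hcol)⟩

lemma IsHarmonious.comp {c : W → α} (hc : IsHarmonious H c) (φ : G →g H)
    (hφ : Set.InjOn (Sym2.map φ) G.edgeSet) : IsHarmonious G (c ∘ φ) := by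
  refine ⟨fun a b hab => hc.1 (φ.map_adj hab), fun a b x y hab hxy hcol => ?_⟩
  have himage : s(φ a, φ b) = s(φ x, φ y) := hc.2 (φ.map_adj hab) (φ.map_adj hxy) hcol
  exact hφ hab hxy (by simpa only [Sym2.map_mk] using himage)

lemma hchrom_le_of_hom [Fintype V] [Fintype W] (φ : G →g H)
    (hφ : Set.InjOn (Sym2.map φ) G.edgeSet) : hchrom G ≤ hchrom H := by
  have hne : {k | ∃ c : W → Fin k, IsHarmonious H c}.Nonempty :=
    ⟨Fintype.card W, Fintype.equivFin W, isHarmonious_of_injective (Fintype.equivFin W).injective⟩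
  obtain ⟨c, hc⟩ := Nat.sInf_mem hne
  exact Nat.sInf_le ⟨c ∘ φ, hc.comp φ hφ⟩

lemma hchrom_le_of_iso [Fintype V] [Fintype W] (e : G ≃g H) : hchrom G ≤ hchrom H :=
  hchrom_le_of_hom e.toHom (Sym2.map.injective e.injective).injOn

section Identify

variable [DecidableEq V] {u v : V}

def identifyMap (huv : u ≠ v) (x : V) : {x : V // x ≠ v} :=
  if h : x = v then ⟨u, huv⟩ else ⟨x, h⟩

lemma eq_or_of_identifyMap_eq (huv : u ≠ v) {x y : V}
    (h : identifyMap huv x = identifyMap huv y) :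
    x = y ∨ (x = u ∧ y = v) ∨ (x = v ∧ y = u) := by
  unfold identifyMap at h
  split_ifs at h with hx hy hy <;> simp only [Subtype.mk.injEq] at h
  · exact Or.inl (hx.trans hy.symm)
  · exact Or.inr (Or.inr ⟨hx, h.symm⟩)
  · exact Or.inr (Or.inl ⟨h, hy⟩)
  · exact Or.inl h

def identifyHom (huv : u ≠ v) (hnadj : ¬ G.Adj u v) : G →g identify G u v where
  toFun := identifyMap huv
  map_rel' {a b} hab := by
    refine ⟨fun h => ?_, ?_⟩
    · rcases eq_or_of_identifyMap_eq huv h with rfl | ⟨rfl, rfl⟩ | ⟨rfl, rfl⟩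
      exacts [hab.ne rfl, hnadj hab, hnadj hab.symm]
    · unfold identifyMap
      split_ifs with ha hb hb
      · exact absurd (ha.trans hb.symm) hab.ne
      · exact Or.inr (Or.inl ⟨rfl, ha ▸ hab⟩)
      · exact Or.inr (Or.inr ⟨rfl, hb ▸ hab⟩)
      · exact Or.inl hab

lemma injOn_sym2Map_identifyHom (hd : DistAtLeastThree G u v) :
    Set.InjOn (Sym2.map (identifyHom hd.1 hd.2.1)) G.edgeSet := by
  obtain ⟨huv, hnadj, hcommon⟩ := hd
  refine G.injOn_sym2Map_edgeSet fun a b x y hab hxy hax hby => ?_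
  by_cases ha : a = x <;> by_cases hb : b = y
  · exact ⟨ha, hb⟩
  · subst ha
    rcases eq_or_of_identifyMap_eq huv hby with h | ⟨rfl, rfl⟩ | ⟨rfl, rfl⟩
    exacts [absurd h hb, (hcommon a ⟨hab.symm, hxy⟩).elim, (hcommon a ⟨hxy.symm, hab⟩).elim]
  · subst hb
    rcases eq_or_of_identifyMap_eq huv hax with h | ⟨rfl, rfl⟩ | ⟨rfl, rfl⟩
    exacts [absurd h ha, (hcommon b ⟨hab, hxy.symm⟩).elim, (hcommon b ⟨hxy, hab.symm⟩).elim]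
  · rcases eq_or_of_identifyMap_eq huv hax with h | ⟨rfl, rfl⟩ | ⟨rfl, rfl⟩ <;>
    rcases eq_or_of_identifyMap_eq huv hby with h' | ⟨rfl, rfl⟩ | ⟨rfl, rfl⟩
    exacts [absurd h ha, absurd h ha, absurd h ha, absurd h' hb, (hab.ne rfl).elim,
      (hnadj hab).elim, absurd h' hb, (hnadj hab.symm).elim, (hab.ne rfl).elim]

lemma hchrom_le_hchrom_identify [Fintype V] (hd : DistAtLeastThree G u v) :
    hchrom G ≤ hchrom (identify G u v) :=
  hchrom_le_of_hom _ (injOn_sym2Map_identifyHom hd)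

end Identify

end

theorem stmt11 {n m : ℕ} (G : SimpleGraph (Fin n)) (H : SimpleGraph (Fin m))
    (hseq : SeqIdent3 G H) : hchrom G ≤ hchrom H := by
  induction hseq with
  | refl G => exact le_rfl
  | step u v hd hiso _ ih =>
    calc hchrom _ ≤ hchrom (identify _ u v) := hchrom_le_hchrom_identify hd
      _ ≤ hchrom _ := hchrom_le_of_iso hiso.some.symm
      _ ≤ _ := ih
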